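/- arXiv:1007.4222 — 3 statements merged into one kernel-verified Lean document; each statement's English description precedes it below -/
import Mathlib

section
/- Let F ⊆ [0,1] be a generalized Cantor set constructed iteratively: F_0 = [0,1], and F_j is obtained from F_{j−1} by replacing each closed interval I by its two closed end-subintervals each of length r_j · |I|, where each ratio r_j ∈ {1/3, 1/5, 1/7}. Let L_j denote the common length of the 2^j intervals of F_j, and let F = ∩_j F_j. Then for every δ with L_j ≤ δ < L_{j−1}, the maximal number of pairwise disjoint closed balls of diameter δ with centres in F equals 2^j. -/
open Filter Topology Metric

/-- `coverNum F δ` : the smallest number of sets of diameter at most `δ` needed to cover `F`. -/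
noncomputable def coverNum {X : Type*} [MetricSpace X] (F : Set X) (δ : ℝ) : ℕ :=
  sInf {n : ℕ | ∃ U : Fin n → Set X, (∀ i, Metric.diam (U i) ≤ δ) ∧ F ⊆ ⋃ i, U i}

/-- Upper box-counting dimension. -/
noncomputable def dimB {X : Type*} [MetricSpace X] (F : Set X) : ℝ :=
  Filter.limsup (fun δ : ℝ => Real.log (coverNum F δ) / (-Real.log δ)) (nhdsWithin 0 (Set.Ioi 0))

/-- Lower box-counting dimension. -/
noncomputable def dimLB {X : Type*} [MetricSpace X] (F : Set X) : ℝ :=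
  Filter.liminf (fun δ : ℝ => Real.log (coverNum F δ) / (-Real.log δ)) (nhdsWithin 0 (Set.Ioi 0))

/-- `packNum F δ` : the largest number of pairwise disjoint closed balls of diameter `δ`
with centres in `F`. -/
noncomputable def packNum {X : Type*} [MetricSpace X] (F : Set X) (δ : ℝ) : ℕ :=
  sSup {n : ℕ | ∃ x : Fin n → X, (∀ i, x i ∈ F) ∧
    Pairwise fun i j => Disjoint (Metric.closedBall (x i) (δ/2)) (Metric.closedBall (x j) (δ/2))}

/-- The product set `F × G` viewed inside `X × Y` with the `ℓ²` (Euclidean-style) product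
metric `d((x,y),(x',y')) = √(d_X(x,x')² + d_Y(y,y')²)`. -/
noncomputable def prodSet {X Y : Type*} [MetricSpace X] [MetricSpace Y]
    (F : Set X) (G : Set Y) : Set (WithLp 2 (X × Y)) :=
  {p | (WithLp.equiv 2 (X × Y) p).1 ∈ F ∧ (WithLp.equiv 2 (X × Y) p).2 ∈ G}
/-- `cantorLen r j` : the common length `L_j = r 1 * ⋯ * r j` of the `2^j` intervals at
stage `j` of the generalized Cantor construction with ratios `r`. -/
noncomputable def cantorLen (r : ℕ → ℝ) (j : ℕ) : ℝ := ∏ i ∈ Finset.range j, r (i + 1)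

/-- Left endpoint of the stage-`j` interval with address `ε`. -/
noncomputable def cantorLeft (r : ℕ → ℝ) (j : ℕ) (ε : ℕ → Bool) : ℝ :=
  ∑ i ∈ Finset.range j, (if ε i then (1 - r (i + 1)) * cantorLen r i else 0)

/-- Stage `j` of the construction: `F_0 = [0,1]`, and `F_j` replaces each interval of
`F_{j-1}` by its two closed end-subintervals of relative length `r j`. -/
noncomputable def genCantorStage (r : ℕ → ℝ) (j : ℕ) : Set ℝ :=
  ⋃ ε : ℕ → Bool, Set.Icc (cantorLeft r j ε) (cantorLeft r j ε + cantorLen r j)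

/-- The generalized Cantor set `F = ⋂ j, F_j`. -/
noncomputable def genCantorSet (r : ℕ → ℝ) : Set ℝ := ⋂ j, genCantorStage r j

/-! Every point of `F` lies in one of the `2^(j+1)` stage-`(j+1)` intervals, which have length
`L_{j+1} ≤ δ`; two centres in the same interval give intersecting balls, so at most `2^(j+1)`
balls fit. Conversely the two endpoints of each of the `2^j` stage-`j` intervals lie in `F`, and
they are pairwise at distance at least `L_j > δ`: the two endpoints of one interval are exactly
`L_j` apart, while the gap `(1 - 2 r_{k+1}) L_k` between sibling intervals of stage `k + 1`
is at least `r_{k+1} L_k = L_{k+1} ≥ L_j` because `r_{k+1} ≤ 1/3`. -/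

open Metric

theorem packNum_eq_of_separated_of_cover {E : Type*} [NormedAddCommGroup E] [NormedSpace ℝ E]
    {F : Set E} {δ : ℝ} (hδ : 0 ≤ δ) {ι κ : Type*} [Fintype ι] [Fintype κ]
    (x : ι → E) (hxF : ∀ i, x i ∈ F) (hsep : Pairwise fun i i' => δ < dist (x i) (x i'))
    (U : κ → Set E) (hFU : F ⊆ ⋃ k, U k) (hU : ∀ k, ∀ y ∈ U k, ∀ z ∈ U k, dist y z ≤ δ)
    (hcard : Fintype.card κ ≤ Fintype.card ι) :
    packNum F δ = Fintype.card ι := by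
  have hdisj_iff : ∀ y z : E, Disjoint (closedBall y (δ / 2)) (closedBall z (δ / 2)) ↔
      δ < dist y z := fun y z => by
    rw [disjoint_closedBall_closedBall_iff (by linarith) (by linarith), add_halves]
  unfold packNum
  refine le_antisymm ((csSup_le' ?bound).trans hcard) (le_csSup ⟨_, ?bound⟩ ?packing)
  case bound =>
    rintro n ⟨y, hyF, hdisj⟩
    by_contra! hn
    choose k hk using fun i => Set.mem_iUnion.mp (hFU (hyF i))
    obtain ⟨i, i', hne, hkk⟩ := Fintype.exists_ne_map_eq_of_card_lt k (by simpa using hn)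
    exact ((hdisj_iff _ _).mp (hdisj hne)).not_ge (hU _ _ (hk i) _ (hkk ▸ hk i'))
  case packing =>
    let e := (Fintype.equivFin ι).symm
    exact ⟨x ∘ e, fun i => hxF _, fun i i' hne =>
      (hdisj_iff _ _).mpr (hsep (e.injective.ne hne))⟩

section GenCantor

variable {r : ℕ → ℝ}

def cantorInterval (r : ℕ → ℝ) (m : ℕ) (ε : ℕ → Bool) : Set ℝ :=
  Set.Icc (cantorLeft r m ε) (cantorLeft r m ε + cantorLen r m)

/-- The left (`b = false`) or right (`b = true`) endpoint of `cantorInterval r m ε`. -/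
noncomputable def cantorEndpoint (r : ℕ → ℝ) (m : ℕ) (ε : ℕ → Bool) (b : Bool) : ℝ :=
  cantorLeft r m ε + if b then cantorLen r m else 0

def cantorAddr {m : ℕ} (c : Fin m → Bool) (b : Bool) (i : ℕ) : Bool :=
  if h : i < m then c ⟨i, h⟩ else b

theorem cantorLen_succ (m : ℕ) : cantorLen r (m + 1) = cantorLen r m * r (m + 1) :=
  Finset.prod_range_succ _ _

theorem cantorLen_nonneg (hr0 : ∀ i, 0 ≤ r i) (m : ℕ) : 0 ≤ cantorLen r m :=
  Finset.prod_nonneg fun i _ => hr0 (i + 1)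

theorem cantorLen_le_of_le (hr0 : ∀ i, 0 ≤ r i) (hr1 : ∀ i, r i ≤ 1) {k m : ℕ} (hkm : k ≤ m) :
    cantorLen r m ≤ cantorLen r k := by
  induction m, hkm using Nat.le_induction with
  | base => exact le_rfl
  | succ m _ ih =>
    rw [cantorLen_succ]
    exact (mul_le_of_le_one_right (cantorLen_nonneg hr0 m) (hr1 _)).trans ih

theorem cantorLeft_succ (m : ℕ) (ε : ℕ → Bool) :
    cantorLeft r (m + 1) ε =
      cantorLeft r m ε + if ε m then (1 - r (m + 1)) * cantorLen r m else 0 :=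
  Finset.sum_range_succ _ _

theorem cantorLeft_congr {m : ℕ} {ε ε' : ℕ → Bool} (h : ∀ i < m, ε i = ε' i) :
    cantorLeft r m ε = cantorLeft r m ε' :=
  Finset.sum_congr rfl fun i hi => by rw [h i (Finset.mem_range.mp hi)]

theorem cantorInterval_succ_subset (hr0 : ∀ i, 0 ≤ r i) (hr1 : ∀ i, r i ≤ 1) (m : ℕ)
    (ε : ℕ → Bool) : cantorInterval r (m + 1) ε ⊆ cantorInterval r m ε := by
  have hL := cantorLen_nonneg hr0 m
  have h0 := hr0 (m + 1)
  have h1 := hr1 (m + 1)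
  refine Set.Icc_subset_Icc ?_ ?_ <;> rw [cantorLeft_succ] <;> try rw [cantorLen_succ]
  all_goals split <;> nlinarith

theorem cantorInterval_subset_of_le (hr0 : ∀ i, 0 ≤ r i) (hr1 : ∀ i, r i ≤ 1) {k m : ℕ}
    (hkm : k ≤ m) (ε : ℕ → Bool) : cantorInterval r m ε ⊆ cantorInterval r k ε := by
  induction m, hkm using Nat.le_induction with
  | base => exact subset_rfl
  | succ m _ ih => exact (cantorInterval_succ_subset hr0 hr1 m ε).trans ih

theorem dist_le_of_mem_cantorInterval {m : ℕ} {ε : ℕ → Bool} {x y : ℝ}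
    (hx : x ∈ cantorInterval r m ε) (hy : y ∈ cantorInterval r m ε) :
    dist x y ≤ cantorLen r m := by
  rw [Real.dist_eq, abs_sub_le_iff]
  constructor <;> linarith [hx.1, hx.2, hy.1, hy.2]

theorem cantorEndpoint_mem_cantorInterval (hr0 : ∀ i, 0 ≤ r i) (m : ℕ) (ε : ℕ → Bool)
    (b : Bool) : cantorEndpoint r m ε b ∈ cantorInterval r m ε := by
  have := cantorLen_nonneg hr0 m
  cases b <;> simp [cantorEndpoint, cantorInterval, this]

theorem cantorEndpoint_eq_of_tail {m : ℕ} {ε : ℕ → Bool} {b : Bool}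
    (htail : ∀ i, m ≤ i → ε i = b) {k : ℕ} (hmk : m ≤ k) :
    cantorEndpoint r k ε b = cantorEndpoint r m ε b := by
  induction k, hmk using Nat.le_induction with
  | base => rfl
  | succ k hmk ih =>
    rw [← ih, cantorEndpoint, cantorEndpoint, cantorLeft_succ, cantorLen_succ, htail k hmk]
    cases b <;> simp only [if_true, if_false, Bool.false_eq_true] <;> ring

/-- An endpoint of a stage interval lies in `F`: continue its address constantly on its side. -/
theorem cantorEndpoint_mem_genCantorSet (hr0 : ∀ i, 0 ≤ r i) (hr1 : ∀ i, r i ≤ 1) {m : ℕ}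
    {ε : ℕ → Bool} {b : Bool} (htail : ∀ i, m ≤ i → ε i = b) :
    cantorEndpoint r m ε b ∈ genCantorSet r := by
  refine Set.mem_iInter.mpr fun k => Set.mem_iUnion.mpr ⟨ε, ?_⟩
  rcases le_total k m with hkm | hmk
  · exact cantorInterval_subset_of_le hr0 hr1 hkm ε (cantorEndpoint_mem_cantorInterval hr0 m ε b)
  · rw [← cantorEndpoint_eq_of_tail htail hmk]
    exact cantorEndpoint_mem_cantorInterval hr0 k ε b

theorem genCantorSet_subset_iUnion_cantorInterval (m : ℕ) :
    genCantorSet r ⊆ ⋃ c : Fin m → Bool, cantorInterval r m (cantorAddr c false) := by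
  intro x hx
  obtain ⟨ε, hε⟩ := Set.mem_iUnion.mp (Set.mem_iInter.mp hx m)
  refine Set.mem_iUnion.mpr ⟨fun i => ε i, ?_⟩
  rwa [cantorInterval, cantorLeft_congr (ε' := ε) fun i hi => by simp [cantorAddr, hi]]

theorem add_cantorLen_le_of_lt (hr0 : ∀ i, 0 ≤ r i) (hr3 : ∀ i, r i ≤ 1 / 3) {k m : ℕ}
    (hkm : k < m) {ε ε' : ℕ → Bool} (hagree : ∀ i < k, ε i = ε' i) (hε : ε k = false)
    (hε' : ε' k = true) {x y : ℝ} (hx : x ∈ cantorInterval r m ε)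
    (hy : y ∈ cantorInterval r m ε') : x + cantorLen r m ≤ y := by
  have hr1 : ∀ i, r i ≤ 1 := fun i => (hr3 i).trans (by norm_num)
  have hx' := cantorInterval_subset_of_le hr0 hr1 hkm ε hx
  have hy' := cantorInterval_subset_of_le hr0 hr1 hkm ε' hy
  simp only [cantorInterval, cantorLeft_succ, cantorLen_succ, hε, hε',
    cantorLeft_congr hagree, if_true, if_false, Bool.false_eq_true, add_zero] at hx' hy'
  have hLm := cantorLen_le_of_le hr0 hr1 hkm
  rw [cantorLen_succ] at hLm
  nlinarith [hx'.2, hy'.1, cantorLen_nonneg hr0 k, hr3 (k + 1)]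

theorem cantorLen_le_dist_of_ne (hr0 : ∀ i, 0 ≤ r i) (hr3 : ∀ i, r i ≤ 1 / 3) {m : ℕ}
    {ε ε' : ℕ → Bool} (hne : ∃ i < m, ε i ≠ ε' i) {x y : ℝ} (hx : x ∈ cantorInterval r m ε)
    (hy : y ∈ cantorInterval r m ε') : cantorLen r m ≤ dist x y := by
  classical
  have hex : ∃ i, ε i ≠ ε' i := hne.imp fun _ => And.right
  obtain ⟨i, him, hi⟩ := hne
  have hkm : Nat.find hex < m := (Nat.find_min' hex hi).trans_lt him
  have hagree : ∀ i < Nat.find hex, ε i = ε' i := fun i hi => not_not.mp (Nat.find_min hex hi)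
  rw [Real.dist_eq]
  cases hεk : ε (Nat.find hex) <;> cases hεk' : ε' (Nat.find hex)
  · exact absurd (hεk.trans hεk'.symm) (Nat.find_spec hex)
  · have := add_cantorLen_le_of_lt hr0 hr3 hkm hagree hεk hεk' hx hy
    exact le_abs.mpr (Or.inr (by linarith))
  · have := add_cantorLen_le_of_lt hr0 hr3 hkm (fun i hi => (hagree i hi).symm) hεk' hεk hy hx
    exact le_abs.mpr (Or.inl (by linarith))
  · exact absurd (hεk.trans hεk'.symm) (Nat.find_spec hex)

theorem cantorLen_le_dist_cantorEndpoint (hr0 : ∀ i, 0 ≤ r i) (hr3 : ∀ i, r i ≤ 1 / 3) {m : ℕ}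
    {p q : Bool × (Fin m → Bool)} (hpq : p ≠ q) :
    cantorLen r m ≤ dist (cantorEndpoint r m (cantorAddr p.2 p.1) p.1)
      (cantorEndpoint r m (cantorAddr q.2 q.1) q.1) := by
  obtain ⟨b, c⟩ := p
  obtain ⟨b', c'⟩ := q
  by_cases hc : c = c'
  · subst hc
    have hb : b ≠ b' := fun hb => hpq (by rw [hb])
    have hleft : cantorLeft r m (cantorAddr c b) = cantorLeft r m (cantorAddr c b') :=
      cantorLeft_congr fun i hi => by simp [cantorAddr, hi]
    have := cantorLen_nonneg hr0 m
    cases b <;> cases b' <;> simp_all [cantorEndpoint, abs_of_nonneg]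
  · obtain ⟨i, hi⟩ := Function.ne_iff.mp hc
    exact cantorLen_le_dist_of_ne hr0 hr3 ⟨i, i.isLt, by simpa [cantorAddr] using hi⟩
      (cantorEndpoint_mem_cantorInterval hr0 m _ b) (cantorEndpoint_mem_cantorInterval hr0 m _ b')

end GenCantor

theorem packNum_genCantorSet (r : ℕ → ℝ)
    (hr : ∀ j, r j = 1/3 ∨ r j = 1/5 ∨ r j = 1/7) (j : ℕ) (δ : ℝ)
    (h1 : cantorLen r (j + 1) ≤ δ) (h2 : δ < cantorLen r j) :
    packNum (genCantorSet r) δ = 2 ^ (j + 1) := by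
  have hr0 : ∀ i, 0 ≤ r i := fun i => by rcases hr i with h | h | h <;> rw [h] <;> norm_num
  have hr3 : ∀ i, r i ≤ 1 / 3 := fun i => by rcases hr i with h | h | h <;> rw [h] <;> norm_num
  have hr1 : ∀ i, r i ≤ 1 := fun i => (hr3 i).trans (by norm_num)
  have hcard : Fintype.card (Bool × (Fin j → Bool)) = 2 ^ (j + 1) := by simp [pow_succ']
  rw [← hcard]
  refine packNum_eq_of_separated_of_cover ((cantorLen_nonneg hr0 _).trans h1)
    (fun p => cantorEndpoint r j (cantorAddr p.2 p.1) p.1)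
    (fun p => cantorEndpoint_mem_genCantorSet hr0 hr1 fun i hi => by simp [cantorAddr, hi.not_gt])
    (fun p q hpq => h2.trans_le (cantorLen_le_dist_cantorEndpoint hr0 hr3 hpq))
    (fun c : Fin (j + 1) → Bool => cantorInterval r (j + 1) (cantorAddr c false))
    (genCantorSet_subset_iUnion_cantorInterval _)
    (fun c y hy z hz => (dist_le_of_mem_cantorInterval hy hz).trans h1) (by simp [hcard])
end

section
/- Let K_j = 10^(2^j), and define f_3(j) = Σ_{n≥0} |{i : K_{6n} < i ≤ min(j, K_{6n+1})}| (the number of stages up to j at which ratio 1/3 was applied in the construction of F). Then f_3(K_{6n+1})/K_{6n+1} → 1 as n → ∞, while f_3(K_{6n+l})/K_{6n+l} → 0 as n → ∞ for each l ∈ {0,2,3,4,5}. -/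
open Filter Topology

/-- The doubly exponential sequence `K j = 10 ^ (2 ^ j)`. -/
def K (j : ℕ) : ℕ := 10 ^ (2 ^ j)

open scoped Classical in
/-- `f3 j` : the number of stages `i ≤ j` lying in some interval `(K (6n), K (6n+1)]`,
i.e. at which the ratio `1/3` is applied in the construction of `F`. -/
noncomputable def f3 (j : ℕ) : ℕ :=
  ((Finset.range (j + 1)).filter fun i => ∃ n : ℕ, K (6 * n) < i ∧ i ≤ K (6 * n + 1)).card

open scoped Classical in
/-- `f7 j` : the number of stages `i ≤ j` lying in some interval `(K (6n+1), K (6n+2)]`. -/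
noncomputable def f7 (j : ℕ) : ℕ :=
  ((Finset.range (j + 1)).filter fun i => ∃ n : ℕ, K (6 * n + 1) < i ∧ i ≤ K (6 * n + 2)).card

open scoped Classical in
/-- `g3 j` : the number of stages `i ≤ j` lying in some interval `(K (6m+3), K (6m+4)]`. -/
noncomputable def g3 (j : ℕ) : ℕ :=
  ((Finset.range (j + 1)).filter fun i => ∃ m : ℕ, K (6 * m + 3) < i ∧ i ≤ K (6 * m + 4)).card

open scoped Classical in
/-- `g7 j` : the number of stages `i ≤ j` lying in some interval `(K (6m+4), K (6m+5)]`. -/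
noncomputable def g7 (j : ℕ) : ℕ :=
  ((Finset.range (j + 1)).filter fun i => ∃ m : ℕ, K (6 * m + 4) < i ∧ i ≤ K (6 * m + 5)).card

/-!
Since `K (j + 1) = K j ^ 2`, any `K a` with `a < b` is at most `K b / K a`. At `K (6n+1)` the
last block `(K (6n), K (6n+1)]` alone misses only `K (6n)` of the stages, a vanishing fraction.
At any `j ≤ K (6n+6)` no stage beyond `K (6n+1)` is counted, so `f3 j ≤ K (6n+1)`; for
`j = K (6n+l)` with `2 ≤ l ≤ 6` this is at most `j / K (6n+1)`, and `l = 6` covers `K (6(n+1)+0)`.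
-/

lemma K_succ (j : ℕ) : K (j + 1) = K j ^ 2 := by
  rw [K, K, pow_succ, pow_mul]

lemma K_pos (j : ℕ) : 0 < K j := by
  unfold K; positivity

lemma K_strictMono : StrictMono K := fun _ _ h =>
  Nat.pow_lt_pow_right (by norm_num) (Nat.pow_lt_pow_right (by norm_num) h)

lemma K_mul_self_le {a b : ℕ} (h : a < b) : K a * K a ≤ K b := by
  simpa only [K_succ, sq] using K_strictMono.monotone (Nat.succ_le_of_lt h)

lemma K_div_K_le_inv {a b : ℕ} (h : a < b) : (K a : ℝ) / K b ≤ (K a : ℝ)⁻¹ := by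
  have hKa : (0 : ℝ) < K a := by exact_mod_cast K_pos a
  have hKb : (0 : ℝ) < K b := by exact_mod_cast K_pos b
  rw [div_le_iff₀ hKb, ← div_eq_inv_mul, le_div_iff₀ hKa]
  exact_mod_cast K_mul_self_le h

lemma tendsto_inv_K_comp {b : ℕ → ℕ} (hb : Tendsto b atTop atTop) :
    Tendsto (fun n => (K (b n) : ℝ)⁻¹) atTop (𝓝 0) :=
  (tendsto_natCast_atTop_atTop.comp (K_strictMono.tendsto_atTop.comp hb)).inv_tendsto_atTop

lemma f3_le_of_forall {j B : ℕ}
    (h : ∀ i ≤ j, ∀ m, K (6 * m) < i → i ≤ K (6 * m + 1) → i ≤ B) : f3 j ≤ B := by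
  calc f3 j ≤ (Finset.Icc 1 B).card := by
        unfold f3
        refine Finset.card_le_card fun i hi => ?_
        obtain ⟨hij, m, hlo, hhi⟩ := by simpa only [Finset.mem_filter, Finset.mem_range] using hi
        exact Finset.mem_Icc.mpr ⟨by omega, h i (by omega) m hlo hhi⟩
    _ = B := by simp

lemma f3_le_self (j : ℕ) : f3 j ≤ j :=
  f3_le_of_forall fun _ hij _ _ _ => hij

lemma f3_le_K_of_le_K {n j : ℕ} (hj : j ≤ K (6 * n + 6)) : f3 j ≤ K (6 * n + 1) := by
  refine f3_le_of_forall fun i hij m hlo hhi => ?_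
  rcases le_or_gt m n with hmn | hmn
  · exact hhi.trans (K_strictMono.monotone (by omega))
  · have : K (6 * n + 6) ≤ K (6 * m) := K_strictMono.monotone (by omega)
    omega

lemma K_sub_K_le_f3 (n : ℕ) : K (6 * n + 1) - K (6 * n) ≤ f3 (K (6 * n + 1)) := by
  classical
  have hsub : Finset.Ioc (K (6 * n)) (K (6 * n + 1)) ⊆ (Finset.range (K (6 * n + 1) + 1)).filter
      fun i => ∃ m, K (6 * m) < i ∧ i ≤ K (6 * m + 1) := fun i hi => by
    obtain ⟨hlo, hhi⟩ := Finset.mem_Ioc.mp hi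
    exact Finset.mem_filter.mpr ⟨Finset.mem_range.mpr (by omega), n, hlo, hhi⟩
  rw [f3]
  simpa using Finset.card_le_card hsub

lemma one_sub_inv_K_le_f3_div (n : ℕ) :
    1 - (K (6 * n) : ℝ)⁻¹ ≤ (f3 (K (6 * n + 1)) : ℝ) / K (6 * n + 1) := by
  have hlower : (K (6 * n + 1) : ℝ) - K (6 * n) ≤ f3 (K (6 * n + 1)) := by
    have hle : K (6 * n) ≤ K (6 * n + 1) := K_strictMono.monotone (by omega)
    rw [← Nat.cast_sub hle]
    exact_mod_cast K_sub_K_le_f3 n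
  calc 1 - (K (6 * n) : ℝ)⁻¹ ≤ 1 - (K (6 * n) : ℝ) / K (6 * n + 1) := by
        gcongr; exact K_div_K_le_inv (by omega)
    _ = ((K (6 * n + 1) : ℝ) - K (6 * n)) / K (6 * n + 1) := by
        rw [sub_div, div_self (by exact_mod_cast (K_pos _).ne')]
    _ ≤ (f3 (K (6 * n + 1)) : ℝ) / K (6 * n + 1) := by gcongr

lemma tendsto_f3_K_div_K_one :
    Tendsto (fun n => (f3 (K (6 * n + 1)) : ℝ) / K (6 * n + 1)) atTop (𝓝 1) := by
  have hlim : Tendsto (fun n => 1 - (K (6 * n) : ℝ)⁻¹) atTop (𝓝 1) := by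
    simpa using (tendsto_inv_K_comp
      (tendsto_atTop_mono (fun n => show n ≤ 6 * n by omega) tendsto_id)).const_sub 1
  exact tendsto_of_tendsto_of_tendsto_of_le_of_le hlim tendsto_const_nhds
    one_sub_inv_K_le_f3_div fun n =>
      div_le_one_of_le₀ (Nat.cast_le.mpr (f3_le_self _)) (Nat.cast_nonneg _)

lemma tendsto_f3_K_div_K_zero {c : ℕ → ℕ} (hc : ∀ n, 6 * n + 2 ≤ c n ∧ c n ≤ 6 * n + 6) :
    Tendsto (fun n => (f3 (K (c n)) : ℝ) / K (c n)) atTop (𝓝 0) := by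
  have hlim : Tendsto (fun n => (K (6 * n + 1) : ℝ)⁻¹) atTop (𝓝 0) :=
    tendsto_inv_K_comp (tendsto_atTop_mono (fun n => show n ≤ 6 * n + 1 by omega) tendsto_id)
  refine tendsto_of_tendsto_of_tendsto_of_le_of_le tendsto_const_nhds hlim
    (fun n => by positivity) fun n => ?_
  obtain ⟨hlo, hhi⟩ := hc n
  have hf3 : f3 (K (c n)) ≤ K (6 * n + 1) :=
    f3_le_K_of_le_K (K_strictMono.monotone hhi)
  calc (f3 (K (c n)) : ℝ) / K (c n) ≤ (K (6 * n + 1) : ℝ) / K (c n) := by gcongr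
    _ ≤ (K (6 * n + 1) : ℝ)⁻¹ := K_div_K_le_inv (by omega)

theorem f3_ratio_limits :
    Filter.Tendsto (fun n : ℕ => (f3 (K (6 * n + 1)) : ℝ) / (K (6 * n + 1) : ℝ))
      Filter.atTop (nhds 1) ∧
    ∀ l ∈ ({0, 2, 3, 4, 5} : Set ℕ),
      Filter.Tendsto (fun n : ℕ => (f3 (K (6 * n + l)) : ℝ) / (K (6 * n + l) : ℝ))
        Filter.atTop (nhds 0) := by
  refine ⟨tendsto_f3_K_div_K_one, ?_⟩
  rintro l (rfl | rfl | rfl | rfl | rfl)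
  · rw [← tendsto_add_atTop_iff_nat 1]
    exact tendsto_f3_K_div_K_zero fun n => by omega
  all_goals exact tendsto_f3_K_div_K_zero fun n => by omega
end

section
/- Let K_j = 10^(2^j). There is no δ > 0 such that simultaneously: (a) 3^{−f_3(K_{6n+2})}·7^{−f_7(K_{6n+2})}·5^{−K_{6n+2}+f_3(K_{6n+2})+f_7(K_{6n+2})} ≤ δ < 3^{−f_3(K_{6n})}·7^{−f_7(K_{6n})}·5^{−K_{6n}+f_3(K_{6n})+f_7(K_{6n})} for some n ∈ ℕ; and (b) 3^{−g_3(K_{6m+5})}·7^{−g_7(K_{6m+5})}·5^{−K_{6m+5}+g_3(K_{6m+5})+g_7(K_{6m+5})} ≤ δ < 3^{−g_3(K_{6m+3})}·7^{−g_7(K_{6m+3})}·5^{−K_{6m+3}+g_3(K_{6m+3})+g_7(K_{6m+3})} for some m ∈ ℕ. -/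
open Filter Topology

/-!
Put `scale a b j = 3^(-a) 7^(-b) 5^(-(j-a-b))`. The pairs `f3, f7` and `g3, g7` count stages in
disjoint intervals avoiding `0`, so the scale reached at stage `j` lies in `[7^(-j), 3^(-j)]`. Since
`7 < 3^2`, any scale reached at a stage `k ≥ 2j` is at most any scale reached at stage `j`, and
`2 K_j ≤ K_{j+1}`. So of the `F`-window (stages `K_{6n}` to `K_{6n+2}`) and the `G`-window (stages
`K_{6m+3}` to `K_{6m+5}`), the one starting first ends at most at half the other's starting stage, and
the two ranges of scales cannot share a `δ`.
-/

noncomputable def scale (a b j : ℕ) : ℝ :=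
  (3:ℝ) ^ (-(a:ℤ)) * (7:ℝ) ^ (-(b:ℤ)) * (5:ℝ) ^ (-(j:ℤ) + a + b)

lemma scale_eq_inv {a b j : ℕ} (h : a + b ≤ j) :
    scale a b j = ((3:ℝ) ^ a * 7 ^ b * 5 ^ (j - a - b))⁻¹ := by
  have hexp : -(j:ℤ) + a + b = -((j - a - b : ℕ) : ℤ) := by omega
  simp only [scale, hexp, zpow_neg, zpow_natCast, mul_inv]

lemma inv_seven_pow_le_scale {a b j : ℕ} (h : a + b ≤ j) : ((7:ℝ) ^ j)⁻¹ ≤ scale a b j := by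
  rw [scale_eq_inv h]
  apply inv_anti₀ (by positivity)
  calc (3:ℝ) ^ a * 7 ^ b * 5 ^ (j - a - b) ≤ 7 ^ a * 7 ^ b * 7 ^ (j - a - b) := by
        gcongr <;> norm_num
    _ = 7 ^ j := by rw [← pow_add, ← pow_add]; congr 1; omega

lemma scale_le_inv_three_pow {a b j : ℕ} (h : a + b ≤ j) : scale a b j ≤ ((3:ℝ) ^ j)⁻¹ := by
  rw [scale_eq_inv h]
  apply inv_anti₀ (by positivity)
  calc (3:ℝ) ^ j = 3 ^ a * 3 ^ b * 3 ^ (j - a - b) := by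
        rw [← pow_add, ← pow_add]; congr 1; omega
    _ ≤ 3 ^ a * 7 ^ b * 5 ^ (j - a - b) := by gcongr <;> norm_num

lemma scale_le_scale_of_two_mul_le {a b j c d k : ℕ} (hab : a + b ≤ j) (hcd : c + d ≤ k)
    (hjk : 2 * j ≤ k) : scale c d k ≤ scale a b j :=
  calc scale c d k ≤ ((3:ℝ) ^ k)⁻¹ := scale_le_inv_three_pow hcd
    _ ≤ ((7:ℝ) ^ j)⁻¹ := by
      apply inv_anti₀ (by positivity)
      calc (7:ℝ) ^ j ≤ 9 ^ j := by gcongr; norm_num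
        _ = 3 ^ (2 * j) := by rw [pow_mul]; norm_num
        _ ≤ 3 ^ k := pow_le_pow_right₀ (by norm_num) hjk
    _ ≤ scale a b j := inv_seven_pow_le_scale hab

lemma two_mul_K_le_K_succ (j : ℕ) : 2 * K j ≤ K (j + 1) := by
  have hsq : K (j + 1) = K j * K j := by rw [K, K, pow_succ, pow_mul, sq]
  have htwo : 2 ≤ K j := Nat.le_self_pow (by positivity) 10 |>.trans' (by norm_num)
  rw [hsq]
  exact Nat.mul_le_mul_right _ htwo

lemma Monotone.eq_of_mem_Ioc_succ {β : Type*} [Preorder β] {f : ℕ → β} (hf : Monotone f)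
    {k l : ℕ} {x : β} (hk : f k < x ∧ x ≤ f (k + 1)) (hl : f l < x ∧ x ≤ f (l + 1)) : k = l := by
  by_contra hkl
  exact Set.disjoint_left.1 (hf.pairwise_disjoint_on_Ioc_succ hkl) (by simpa using hk)
    (by simpa using hl)

lemma card_filter_add_card_filter_le {P Q : ℕ → Prop} [DecidablePred P] [DecidablePred Q]
    (hPQ : ∀ i, P i → ¬ Q i) (hP : ¬ P 0) (hQ : ¬ Q 0) (j : ℕ) :
    ((Finset.range (j + 1)).filter P).card + ((Finset.range (j + 1)).filter Q).card ≤ j := by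
  rw [← Finset.card_union_of_disjoint (Finset.disjoint_filter.2 fun i _ => hPQ i)]
  calc _ ≤ ((Finset.range (j + 1)).erase 0).card := by
        apply Finset.card_le_card
        intro i hi
        rcases Finset.mem_union.1 hi with hi | hi <;>
          obtain ⟨hij, hi⟩ := Finset.mem_filter.1 hi
        · exact Finset.mem_erase.2 ⟨by rintro rfl; exact hP hi, hij⟩
        · exact Finset.mem_erase.2 ⟨by rintro rfl; exact hQ hi, hij⟩
    _ = j := by simp

lemma f3_add_f7_le (j : ℕ) : f3 j + f7 j ≤ j := by
  classical
  refine card_filter_add_card_filter_le ?_ (by simp) (by simp) j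
  rintro i ⟨n, hn⟩ ⟨n', hn'⟩
  have := K_strictMono.monotone.eq_of_mem_Ioc_succ hn hn'
  omega

lemma g3_add_g7_le (j : ℕ) : g3 j + g7 j ≤ j := by
  classical
  refine card_filter_add_card_filter_le ?_ (by simp) (by simp) j
  rintro i ⟨m, hm⟩ ⟨m', hm'⟩
  have := K_strictMono.monotone.eq_of_mem_Ioc_succ hm hm'
  omega

theorem no_common_length_scale :
    ¬ ∃ δ : ℝ, 0 < δ ∧
      (∃ n : ℕ,
        (3:ℝ) ^ (-(f3 (K (6 * n + 2)) : ℤ)) * (7:ℝ) ^ (-(f7 (K (6 * n + 2)) : ℤ)) *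
            (5:ℝ) ^ (-(K (6 * n + 2) : ℤ) + (f3 (K (6 * n + 2)) : ℤ) + (f7 (K (6 * n + 2)) : ℤ))
          ≤ δ ∧
        δ < (3:ℝ) ^ (-(f3 (K (6 * n)) : ℤ)) * (7:ℝ) ^ (-(f7 (K (6 * n)) : ℤ)) *
            (5:ℝ) ^ (-(K (6 * n) : ℤ) + (f3 (K (6 * n)) : ℤ) + (f7 (K (6 * n)) : ℤ))) ∧
      (∃ m : ℕ,
        (3:ℝ) ^ (-(g3 (K (6 * m + 5)) : ℤ)) * (7:ℝ) ^ (-(g7 (K (6 * m + 5)) : ℤ)) *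
            (5:ℝ) ^ (-(K (6 * m + 5) : ℤ) + (g3 (K (6 * m + 5)) : ℤ) + (g7 (K (6 * m + 5)) : ℤ))
          ≤ δ ∧
        δ < (3:ℝ) ^ (-(g3 (K (6 * m + 3)) : ℤ)) * (7:ℝ) ^ (-(g7 (K (6 * m + 3)) : ℤ)) *
            (5:ℝ) ^ (-(K (6 * m + 3) : ℤ) + (g3 (K (6 * m + 3)) : ℤ) + (g7 (K (6 * m + 3)) : ℤ))) := by
  rintro ⟨δ, -, ⟨n, hF_lo, hF_hi⟩, ⟨m, hG_lo, hG_hi⟩⟩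
  rcases le_or_gt n m with hnm | hmn
  · have hK : 2 * K (6 * n + 2) ≤ K (6 * m + 3) :=
      (two_mul_K_le_K_succ _).trans (K_strictMono.monotone (by omega))
    exact (hG_hi.trans_le
      (scale_le_scale_of_two_mul_le (f3_add_f7_le _) (g3_add_g7_le _) hK)).not_ge hF_lo
  · have hK : 2 * K (6 * m + 5) ≤ K (6 * n) :=
      (two_mul_K_le_K_succ _).trans (K_strictMono.monotone (by omega))
    exact (hF_hi.trans_le
      (scale_le_scale_of_two_mul_le (g3_add_g7_le _) (f3_add_f7_le _) hK)).not_ge hG_lo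
end
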